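/- arXiv:1701.08288 — 2 statements merged into one kernel-verified Lean document; each statement's English description precedes it below -/
import Mathlib

section
/- Monotonicity for upward-closed events: let E be a finite set and F a family of subsets of E that is upward closed (if S ∈ F and S ⊆ T ⊆ E then T ∈ F). If p, q : E → ℝ satisfy 0 ≤ p(e) ≤ q(e) ≤ 1 for all e ∈ E, then ∑_{S ∈ F} P_p(S) ≤ ∑_{S ∈ F} P_q(S). -/
open Finset
open scoped Classical

/-- Possible-world probability of the world `S` (subset of the crowdsourced
edge set `A`) in an uncertain graph with edge probabilities `p`. -/
noncomputable def PW {E : Type*} [DecidableEq E] (A : Finset E) (p : E → ℝ)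
    (S : Finset E) : ℝ :=
  (∏ e ∈ S, p e) * ∏ e ∈ A \ S, (1 - p e)

lemma PW_update {E : Type*} [DecidableEq E] (A : Finset E) (f : E → ℝ) (e : E)
    (he : e ∈ A) (t : ℝ) (S : Finset E) (hS : S ⊆ A) :
    PW A (Function.update f e t) S =
      (if e ∈ S then t else 1 - t) *
        ((∏ x ∈ S.erase e, f x) * ∏ x ∈ (A \ S).erase e, (1 - f x)) := by
  unfold PW
  by_cases h : e ∈ S
  · rw [if_pos h, ← Finset.mul_prod_erase S _ h, Function.update_self]
    have h1 : ∏ x ∈ S.erase e, Function.update f e t x = ∏ x ∈ S.erase e, f x :=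
      Finset.prod_congr rfl fun x hx =>
        Function.update_of_ne (Finset.ne_of_mem_erase hx) _ _
    have h2 : (A \ S).erase e = A \ S :=
      Finset.erase_eq_of_notMem (by simp [Finset.mem_sdiff, h])
    have h3 : ∏ x ∈ A \ S, (1 - Function.update f e t x) = ∏ x ∈ A \ S, (1 - f x) :=
      Finset.prod_congr rfl fun x hx => by
        rw [Function.update_of_ne (by rintro rfl; exact (Finset.mem_sdiff.1 hx).2 h) _ _]
    rw [h1, h2, h3]; ring
  · rw [if_neg h]
    have he' : e ∈ A \ S := Finset.mem_sdiff.2 ⟨he, h⟩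
    rw [← Finset.mul_prod_erase (A \ S) _ he', Function.update_self]
    have h1 : ∏ x ∈ S, Function.update f e t x = ∏ x ∈ S, f x :=
      Finset.prod_congr rfl fun x hx =>
        Function.update_of_ne (by rintro rfl; exact h hx) _ _
    have h2 : S.erase e = S := Finset.erase_eq_of_notMem h
    have h3 : ∏ x ∈ (A \ S).erase e, (1 - Function.update f e t x) =
        ∏ x ∈ (A \ S).erase e, (1 - f x) :=
      Finset.prod_congr rfl fun x hx => by
        rw [Function.update_of_ne (Finset.ne_of_mem_erase hx) _ _]
    rw [h1, h2, h3]; ring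

lemma step_lemma {E : Type*} [DecidableEq E] (A : Finset E) (F : Finset (Finset E))
    (hF : ∀ S ∈ F, S ⊆ A)
    (hup : ∀ S ∈ F, ∀ T : Finset E, S ⊆ T → T ⊆ A → T ∈ F)
    (f : E → ℝ) (hf : ∀ x ∈ A, 0 ≤ f x ∧ f x ≤ 1)
    (e : E) (he : e ∈ A) (a b : ℝ) (hab : a ≤ b) :
    ∑ S ∈ F, PW A (Function.update f e a) S ≤
      ∑ S ∈ F, PW A (Function.update f e b) S := by
  set W : Finset E → ℝ :=
    fun S => (∏ x ∈ S.erase e, f x) * ∏ x ∈ (A \ S).erase e, (1 - f x) with hWdef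
  have hW : ∀ S ∈ F, 0 ≤ W S := by
    intro S hS
    apply mul_nonneg
    · exact Finset.prod_nonneg fun x hx =>
        (hf x (hF S hS (Finset.mem_of_mem_erase hx))).1
    · exact Finset.prod_nonneg fun x hx => by
        have := hf x (Finset.mem_sdiff.1 (Finset.mem_of_mem_erase hx)).1
        linarith [this.2]
  have key : ∀ t : ℝ, ∑ S ∈ F, PW A (Function.update f e t) S =
      t * ∑ S ∈ F.filter (fun S => e ∈ S), W S
      + (1 - t) * ∑ S ∈ F.filter (fun S => e ∉ S), W S := by
    intro t
    rw [Finset.mul_sum, Finset.mul_sum,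
      ← Finset.sum_filter_add_sum_filter_not F (fun S => e ∈ S)]
    congr 1
    · refine Finset.sum_congr rfl fun S hS => ?_
      rw [PW_update A f e he t S (hF S (Finset.mem_filter.1 hS).1),
        if_pos (Finset.mem_filter.1 hS).2]
    · refine Finset.sum_congr rfl fun S hS => ?_
      rw [PW_update A f e he t S (hF S (Finset.mem_filter.1 hS).1),
        if_neg (Finset.mem_filter.1 hS).2]
  rw [key a, key b]
  set D1 := ∑ S ∈ F.filter (fun S => e ∈ S), W S with hD1
  set D0 := ∑ S ∈ F.filter (fun S => e ∉ S), W S with hD0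
  have hle : D0 ≤ D1 := by
    have himg : (F.filter (fun S => e ∉ S)).image (insert e) ⊆
        F.filter (fun S => e ∈ S) := by
      intro T hT
      obtain ⟨S, hS, rfl⟩ := Finset.mem_image.1 hT
      have hS' := Finset.mem_filter.1 hS
      exact Finset.mem_filter.2 ⟨hup S hS'.1 _ (Finset.subset_insert e S)
        (Finset.insert_subset he (hF S hS'.1)), Finset.mem_insert_self e S⟩
    have hinj : ∀ S₁ ∈ F.filter (fun S => e ∉ S), ∀ S₂ ∈ F.filter (fun S => e ∉ S),
        insert e S₁ = insert e S₂ → S₁ = S₂ := by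
      intro S₁ hS₁ S₂ hS₂ hins
      have h₁ := (Finset.mem_filter.1 hS₁).2
      have h₂ := (Finset.mem_filter.1 hS₂).2
      rw [← Finset.erase_insert h₁, ← Finset.erase_insert h₂, hins]
    have hWins : ∀ S ∈ F.filter (fun S => e ∉ S), W (insert e S) = W S := by
      intro S hS
      have hS' := (Finset.mem_filter.1 hS).2
      have h1 : (insert e S).erase e = S := Finset.erase_insert hS'
      have h2 : A \ insert e S = (A \ S).erase e := by
        ext x
        simp only [Finset.mem_sdiff, Finset.mem_erase, Finset.mem_insert]
        tauto
      have h3 : ((A \ S).erase e).erase e = (A \ S).erase e := by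
        rw [Finset.erase_idem]
      have h4 : S.erase e = S := Finset.erase_eq_of_notMem hS'
      simp only [hWdef, h1, h2, h3, h4]
    calc D0 = ∑ T ∈ (F.filter (fun S => e ∉ S)).image (insert e), W T := by
          rw [Finset.sum_image hinj]
          exact Finset.sum_congr rfl fun S hS => (hWins S hS).symm
      _ ≤ D1 := Finset.sum_le_sum_of_subset_of_nonneg himg
          (fun T hT _ => hW T (Finset.mem_filter.1 hT).1)
  nlinarith [hle, hab]

/-- Monotonicity of the probability of an upward-closed family of possible worlds
in the edge probabilities. -/
theorem upward_closed_monotone {E : Type*} [DecidableEq E] (A : Finset E)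
    (F : Finset (Finset E)) (hF : ∀ S ∈ F, S ⊆ A)
    (hup : ∀ S ∈ F, ∀ T : Finset E, S ⊆ T → T ⊆ A → T ∈ F)
    (p q : E → ℝ) (h : ∀ e ∈ A, 0 ≤ p e ∧ p e ≤ q e ∧ q e ≤ 1) :
    ∑ S ∈ F, PW A p S ≤ ∑ S ∈ F, PW A q S := by
  classical
  set r : Finset E → E → ℝ := fun B x => if x ∈ B then q x else p x with hr
  have main : ∀ B : Finset E, B ⊆ A →
      ∑ S ∈ F, PW A p S ≤ ∑ S ∈ F, PW A (r B) S := by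
    intro B
    induction B using Finset.induction_on with
    | empty =>
      intro _
      have : r ∅ = p := by funext x; simp [hr]
      rw [this]
    | @insert e B hx ih =>
      intro hBA
      have heA : e ∈ A := hBA (Finset.mem_insert_self e B)
      have hBA' : B ⊆ A := fun x hxB => hBA (Finset.mem_insert_of_mem hxB)
      refine le_trans (ih hBA') ?_
      have h1 : r B = Function.update (r B) e (p e) := by
        funext x
        by_cases hxe : x = e
        · subst hxe; simp [hr, hx]
        · simp [Function.update_of_ne hxe]
      have h2 : r (insert e B) = Function.update (r B) e (q e) := by
        funext x
        by_cases hxe : x = e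
        · subst hxe; simp [hr]
        · simp [hr, Function.update_of_ne hxe, Finset.mem_insert, hxe]
      rw [h1, h2]
      apply step_lemma A F hF hup (r B) ?_ e heA (p e) (q e) (h e heA).2.1
      intro x hxA
      by_cases hxB : x ∈ B
      · simp only [hr, if_pos hxB]
        exact ⟨le_trans (h x hxA).1 (h x hxA).2.1, (h x hxA).2.2⟩
      · simp only [hr, if_neg hxB]
        exact ⟨(h x hxA).1, le_trans (h x hxA).2.1 (h x hxA).2.2⟩
  refine le_trans (main A Finset.Subset.rfl) (le_of_eq ?_)
  refine Finset.sum_congr rfl fun S hS => ?_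
  unfold PW
  congr 1
  · exact Finset.prod_congr rfl fun x hxS => by simp [hr, hF S hS hxS]
  · exact Finset.prod_congr rfl fun x hxd => by
      simp [hr, (Finset.mem_sdiff.1 hxd).1]
end

section
/- Reliability is unchanged when the new edge has consistent-label probability 0 and increases monotonically with it (Lemma 3 of the paper): let C = {R_1, …, R_m} be a partition of V with Connect_p(R_i) > 0 for every i and Disconnect_p(R_j, R_k) > 0 for all j < k. Let e₀ ∉ E be an unordered pair of distinct elements of V. Case (a): if both elements of e₀ lie in one block R_i, set Rel'(w) = Rel_{p[e₀↦w]}(C) computed over the edge set E ∪ {e₀}. Case (b): if the elements of e₀ lie in two distinct blocks, set Rel'(w) = Rel_{p[e₀↦1−w]}(C) over E ∪ {e₀}. In both cases Rel'(0) = Rel_p(C), and Rel' is monotone nondecreasing on [0, 1]. -/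
open Finset
open scoped Classical

variable {V : Type*}

/-- Both endpoints of the unordered pair `e` lie in the cluster `R`. -/
def insideCluster (R : Finset V) (e : Sym2 V) : Prop := ∀ v ∈ e, v ∈ R

/-- One endpoint of `e` lies in `Rj` and the other in `Rk`. -/
def crossPair (Rj Rk : Finset V) (e : Sym2 V) : Prop :=
  ∃ u ∈ Rj, ∃ v ∈ Rk, e = s(u, v)

/-- The graph with vertex set `R` and (YES-)edge set `S` is connected:
all records in `R` are joined by the edges of `S`. -/
def connOn (R : Finset V) (S : Finset (Sym2 V)) : Prop :=
  ∀ u ∈ R, ∀ v ∈ R, (SimpleGraph.fromEdgeSet (↑S : Set (Sym2 V))).Reachable u v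

/-- Connectivity of a cluster `R`:  probability that in a possible world of the
subgraph induced by `R` all records of `R` are connected. -/
noncomputable def Connect [DecidableEq V] (A : Finset (Sym2 V)) (p : Sym2 V → ℝ)
    (R : Finset V) : ℝ :=
  ∑ S ∈ (A.filter (insideCluster R)).powerset,
    PW (A.filter (insideCluster R)) p S * (if connOn R S then 1 else 0)

/-- Disconnectivity of a pair of disjoint clusters `Rj`, `Rk`. -/
noncomputable def Disconnect [DecidableEq V] (A : Finset (Sym2 V)) (p : Sym2 V → ℝ)
    (Rj Rk : Finset V) : ℝ :=
  if A.filter (crossPair Rj Rk) = ∅ then 0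
  else 1 - ∏ e ∈ A.filter (crossPair Rj Rk), p e

/-- Reliability of the clustering `R = {R 0, …, R (m-1)}`. -/
noncomputable def Reliability [DecidableEq V] (A : Finset (Sym2 V)) (p : Sym2 V → ℝ)
    {m : ℕ} (R : Fin m → Finset V) : ℝ :=
  (∑ i, Real.log (Connect A p (R i))) +
    ∑ i, ∑ j ∈ Finset.Ioi i, Real.log (Disconnect A p (R i) (R j))

lemma PW_congr {E : Type*} [DecidableEq E] {A : Finset E} {p q : E → ℝ}
    (h : ∀ e ∈ A, p e = q e) {S : Finset E} (hS : S ⊆ A) :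
    PW A p S = PW A q S := by
  unfold PW
  congr 1
  · exact Finset.prod_congr rfl fun e he => h e (hS he)
  · exact Finset.prod_congr rfl fun e he => by rw [h e (Finset.mem_sdiff.mp he).1]

lemma PW_nonneg {E : Type*} [DecidableEq E] {A : Finset E} {p : E → ℝ}
    (hp : ∀ e ∈ A, 0 ≤ p e ∧ p e ≤ 1) {S : Finset E} (hS : S ⊆ A) : 0 ≤ PW A p S := by
  unfold PW
  apply mul_nonneg
  · exact Finset.prod_nonneg fun e he => (hp e (hS he)).1
  · exact Finset.prod_nonneg fun e he => by
      have := (hp e (Finset.mem_sdiff.mp he).1).2; linarith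

lemma Connect_congr [DecidableEq V] {A : Finset (Sym2 V)} {p q : Sym2 V → ℝ}
    (h : ∀ e ∈ A, p e = q e) (R : Finset V) :
    Connect A p R = Connect A q R := by
  unfold Connect
  refine Finset.sum_congr rfl fun S hS => ?_
  rw [PW_congr (fun e he => h e (Finset.mem_filter.mp he).1) (Finset.mem_powerset.mp hS)]

lemma Connect_insert_not_inside [DecidableEq V] {A : Finset (Sym2 V)} {p : Sym2 V → ℝ}
    {R : Finset V} {e0 : Sym2 V} (hni : ¬ insideCluster R e0) (he : e0 ∉ A) (q : ℝ) :
    Connect (insert e0 A) (Function.update p e0 q) R = Connect A p R := by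
  have hfil : (insert e0 A).filter (insideCluster R) = A.filter (insideCluster R) := by
    rw [Finset.filter_insert, if_neg hni]
  have hne : ∀ e ∈ A.filter (insideCluster R), Function.update p e0 q e = p e := by
    intro e heF
    have : e ≠ e0 := by
      intro h; subst h; exact he (Finset.mem_filter.mp heF).1
    exact Function.update_of_ne this _ _
  unfold Connect
  rw [hfil]
  refine Finset.sum_congr rfl fun S hS => ?_
  rw [PW_congr hne (Finset.mem_powerset.mp hS)]

lemma Disconnect_insert_not_cross [DecidableEq V] {A : Finset (Sym2 V)} {p : Sym2 V → ℝ}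
    {Rj Rk : Finset V} {e0 : Sym2 V} (hnc : ¬ crossPair Rj Rk e0) (he : e0 ∉ A) (q : ℝ) :
    Disconnect (insert e0 A) (Function.update p e0 q) Rj Rk = Disconnect A p Rj Rk := by
  have hfil : (insert e0 A).filter (crossPair Rj Rk) = A.filter (crossPair Rj Rk) := by
    rw [Finset.filter_insert, if_neg hnc]
  have hne : ∀ e ∈ A.filter (crossPair Rj Rk), Function.update p e0 q e = p e := by
    intro e heF
    have : e ≠ e0 := by
      intro h; subst h; exact he (Finset.mem_filter.mp heF).1
    exact Function.update_of_ne this _ _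
  unfold Disconnect
  rw [hfil]
  rw [Finset.prod_congr rfl hne]

lemma Connect_insert_inside [DecidableEq V] {A : Finset (Sym2 V)} {p : Sym2 V → ℝ}
    (hp : ∀ e ∈ A, 0 ≤ p e ∧ p e ≤ 1) {R : Finset V} {e0 : Sym2 V}
    (hin : insideCluster R e0) (he : e0 ∉ A) :
    ∃ C1, Connect A p R ≤ C1 ∧ ∀ w : ℝ,
      Connect (insert e0 A) (Function.update p e0 w) R
        = (1 - w) * Connect A p R + w * C1 := by
  classical
  set F := A.filter (insideCluster R) with hF
  have hFA : F ⊆ A := Finset.filter_subset _ _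
  have he0F : e0 ∉ F := fun h => he (hFA h)
  have hpF : ∀ e ∈ F, 0 ≤ p e ∧ p e ≤ 1 := fun e heF => hp e (hFA heF)
  refine ⟨∑ S ∈ F.powerset, PW F p S * (if connOn R (insert e0 S) then 1 else 0), ?_, ?_⟩
  · unfold Connect
    rw [← hF]
    refine Finset.sum_le_sum fun S hS => ?_
    refine mul_le_mul_of_nonneg_left ?_ (PW_nonneg hpF (Finset.mem_powerset.mp hS))
    by_cases h : connOn R S
    · have h2 : connOn R (insert e0 S) := by
        intro a ha b hb
        refine (h a ha b hb).mono (SimpleGraph.fromEdgeSet_mono ?_)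
        intro x hx
        simp only [Finset.coe_insert, Set.mem_insert_iff]
        exact Or.inr hx
      rw [if_pos h, if_pos h2]
    · rw [if_neg h]
      split <;> norm_num
  · intro w
    set p' := Function.update p e0 w with hp'
    have hpe : ∀ e ∈ F, p' e = p e := by
      intro e heF
      have hne : e ≠ e0 := by intro h; subst h; exact he0F heF
      exact Function.update_of_ne hne _ _
    have hpe0 : p' e0 = w := Function.update_self _ _ _
    have hfil : (insert e0 A).filter (insideCluster R) = insert e0 F := by
      rw [Finset.filter_insert, if_pos hin, hF]
    have hpw1 : ∀ S ∈ F.powerset, PW (insert e0 F) p' S = (1 - w) * PW F p S := by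
      intro S hS
      have hSF : S ⊆ F := Finset.mem_powerset.mp hS
      have he0S : e0 ∉ S := fun h => he0F (hSF h)
      unfold PW
      rw [Finset.insert_sdiff_of_notMem _ he0S,
        Finset.prod_insert (fun h => he0F (Finset.mem_sdiff.mp h).1)]
      rw [hpe0]
      have h1 : ∏ e ∈ S, p' e = ∏ e ∈ S, p e :=
        Finset.prod_congr rfl fun e heS => hpe e (hSF heS)
      have h2 : ∏ x ∈ F \ S, (1 - p' x) = ∏ x ∈ F \ S, (1 - p x) :=
        Finset.prod_congr rfl fun e heD => by rw [hpe e (Finset.mem_sdiff.mp heD).1]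
      rw [h1, h2]
      ring
    have hpw2 : ∀ S ∈ F.powerset,
        PW (insert e0 F) p' (insert e0 S) = w * PW F p S := by
      intro S hS
      have hSF : S ⊆ F := Finset.mem_powerset.mp hS
      have he0S : e0 ∉ S := fun h => he0F (hSF h)
      have hsd : insert e0 F \ insert e0 S = F \ S := by
        ext x
        simp only [Finset.mem_sdiff, Finset.mem_insert, not_or]
        constructor
        · rintro ⟨hx1 | hx1, hx2, hx3⟩
          · exact absurd hx1 hx2
          · exact ⟨hx1, hx3⟩
        · rintro ⟨hx1, hx2⟩
          exact ⟨Or.inr hx1, fun h => he0F (h ▸ hx1), hx2⟩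
      unfold PW
      rw [hsd, Finset.prod_insert he0S, hpe0]
      have h1 : ∏ e ∈ S, p' e = ∏ e ∈ S, p e :=
        Finset.prod_congr rfl fun e heS => hpe e (hSF heS)
      have h2 : ∏ x ∈ F \ S, (1 - p' x) = ∏ x ∈ F \ S, (1 - p x) :=
        Finset.prod_congr rfl fun e heD => by rw [hpe e (Finset.mem_sdiff.mp heD).1]
      rw [h1, h2]
      ring
    unfold Connect
    rw [← hF, hfil, Finset.sum_powerset_insert he0F, Finset.mul_sum, Finset.mul_sum]
    congr 1
    · refine Finset.sum_congr rfl fun S hS => ?_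
      rw [hpw1 S hS]; ring
    · refine Finset.sum_congr rfl fun S hS => ?_
      rw [hpw2 S hS]; ring

lemma Disconnect_insert_cross [DecidableEq V] {A : Finset (Sym2 V)} {p : Sym2 V → ℝ}
    {Rj Rk : Finset V} {e0 : Sym2 V} (hc : crossPair Rj Rk e0) (he : e0 ∉ A) (q : ℝ) :
    Disconnect (insert e0 A) (Function.update p e0 q) Rj Rk
      = 1 - q * ∏ e ∈ A.filter (crossPair Rj Rk), p e := by
  classical
  set G := A.filter (crossPair Rj Rk) with hG
  have he0G : e0 ∉ G := fun h => he (Finset.mem_filter.mp h).1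
  have hfil : (insert e0 A).filter (crossPair Rj Rk) = insert e0 G := by
    rw [Finset.filter_insert, if_pos hc, hG]
  have hne : insert e0 G ≠ ∅ := Finset.insert_ne_empty _ _
  unfold Disconnect
  rw [hfil, if_neg hne, Finset.prod_insert he0G, Function.update_self]
  have : ∏ e ∈ G, Function.update p e0 q e = ∏ e ∈ G, p e := by
    refine Finset.prod_congr rfl fun e heG => ?_
    have : e ≠ e0 := by intro h; subst h; exact he0G heG
    exact Function.update_of_ne this _ _
  rw [this]

lemma sum_sub_single {α : Type*} [DecidableEq α] (s : Finset α) (f g : α → ℝ) (i0 : α)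
    (hi0 : i0 ∈ s) (h : ∀ i ∈ s, i ≠ i0 → f i = g i) :
    ∑ i ∈ s, f i = (∑ i ∈ s, g i) + (f i0 - g i0) := by
  have key : ∀ i ∈ s, f i = g i + (if i = i0 then f i0 - g i0 else 0) := by
    intro i hi
    by_cases hii : i = i0
    · subst hii; simp
    · simp [hii, h i hi hii]
  rw [Finset.sum_congr rfl key, Finset.sum_add_distrib,
    Finset.sum_ite_eq' s i0, if_pos hi0]

lemma sum2_sub_single {m : ℕ} (f g : Fin m → Fin m → ℝ) (i0 j0 : Fin m) (hij : i0 < j0)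
    (h : ∀ i, ∀ j ∈ Finset.Ioi i, ¬(i = i0 ∧ j = j0) → f i j = g i j) :
    ∑ i, ∑ j ∈ Finset.Ioi i, f i j
      = (∑ i, ∑ j ∈ Finset.Ioi i, g i j) + (f i0 j0 - g i0 j0) := by
  have key : ∀ i ∈ Finset.univ, (fun i => ∑ j ∈ Finset.Ioi i, f i j) i
      = (fun i => ∑ j ∈ Finset.Ioi i, g i j) i
        + (if i = i0 then f i0 j0 - g i0 j0 else 0) := by
    intro i _
    by_cases hi : i = i0
    · subst hi
      rw [if_pos rfl]
      exact sum_sub_single (Finset.Ioi i) (f i) (g i) j0 (Finset.mem_Ioi.mpr hij)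
        (fun j hj hne => h i j hj (fun hx => hne hx.2))
    · rw [if_neg hi, add_zero]
      exact Finset.sum_congr rfl fun j hj => h i j hj (fun hx => hi hx.1)
  rw [Finset.sum_congr rfl key, Finset.sum_add_distrib,
    Finset.sum_ite_eq' Finset.univ i0, if_pos (Finset.mem_univ _)]

/-- Lemma 3 of the paper: reliability is unchanged when the newly crowdsourced
edge has consistent-label probability 0, and it is nondecreasing in the
consistent-label probability.  The new edge `s(u,v)` either lies inside one
block of the clustering (case (a): consistent-label probability is its
YES-probability `w`) or joins two distinct blocks (case (b): consistent-label
probability is its NO-probability, so its YES-probability is `1 - w`). -/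
theorem reliability_new_edge_monotone {V : Type*} [DecidableEq V] [Fintype V]
    (A : Finset (Sym2 V)) (hA : ∀ e ∈ A, ¬ e.IsDiag) (p : Sym2 V → ℝ)
    (hp : ∀ e ∈ A, 0 ≤ p e ∧ p e ≤ 1)
    {m : ℕ} (R : Fin m → Finset V)
    (hdisj : ∀ i j, i ≠ j → Disjoint (R i) (R j))
    (hcover : ∀ x : V, ∃ i, x ∈ R i)
    (hconn : ∀ i, 0 < Connect A p (R i))
    (hdisc : ∀ i j, i < j → 0 < Disconnect A p (R i) (R j))
    (u v : V) (huv : u ≠ v) (he : s(u, v) ∉ A)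
    (Rel' : ℝ → ℝ)
    (hRel' : ∀ w, Rel' w =
      Reliability (insert (s(u, v)) A)
        (Function.update p (s(u, v)) (if ∃ i, u ∈ R i ∧ v ∈ R i then w else 1 - w)) R) :
    Rel' 0 = Reliability A p R ∧ MonotoneOn Rel' (Set.Icc (0 : ℝ) 1) := by
  classical
  set e0 := s(u, v) with he0
  have hmem_u : u ∈ e0 := Sym2.mem_iff.mpr (Or.inl rfl)
  have hmem_v : v ∈ e0 := Sym2.mem_iff.mpr (Or.inr rfl)
  have hkey : ∀ {i j : Fin m} {x : V}, x ∈ R i → x ∈ R j → i = j := by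
    intro i j x hi hj
    by_contra hne
    exact (Finset.disjoint_left.mp (hdisj i j hne) hi) hj
  by_cases hcase : ∃ i, u ∈ R i ∧ v ∈ R i
  · -- case (a)
    obtain ⟨i0, hu, hv⟩ := hcase
    have hin0 : insideCluster (R i0) e0 := by
      intro z hz
      rcases Sym2.mem_iff.mp hz with rfl | rfl
      · exact hu
      · exact hv
    have hnin : ∀ i, i ≠ i0 → ¬ insideCluster (R i) e0 := by
      intro i hne hins
      exact hne (hkey (hins u hmem_u) hu)
    have hncross : ∀ i j, i ≠ j → ¬ crossPair (R i) (R j) e0 := by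
      rintro i j hne ⟨a, ha, b, hb, hab⟩
      rcases Sym2.eq_iff.mp hab with ⟨rfl, rfl⟩ | ⟨rfl, rfl⟩
      · exact hne ((hkey ha hu).trans (hkey hb hv).symm)
      · exact hne ((hkey ha hv).trans (hkey hb hu).symm)
    obtain ⟨C1, hC1, hdec⟩ := Connect_insert_inside hp hin0 he
    set C0 := Connect A p (R i0) with hC0
    have hC0pos : 0 < C0 := hconn i0
    have hform : ∀ w, Rel' w = Reliability A p R
        + (Real.log ((1 - w) * C0 + w * C1) - Real.log C0) := by
      intro w
      rw [hRel' w, if_pos ⟨i0, hu, hv⟩]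
      unfold Reliability
      have h1 : ∑ i, Real.log (Connect (insert e0 A) (Function.update p e0 w) (R i))
          = (∑ i, Real.log (Connect A p (R i)))
            + (Real.log ((1 - w) * C0 + w * C1) - Real.log C0) := by
        rw [sum_sub_single Finset.univ _ _ i0 (Finset.mem_univ _)
          (fun i _ hne => by rw [Connect_insert_not_inside (hnin i hne) he])]
        rw [hdec w]
      have h2 : ∑ i, ∑ j ∈ Finset.Ioi i,
            Real.log (Disconnect (insert e0 A) (Function.update p e0 w) (R i) (R j))
          = ∑ i, ∑ j ∈ Finset.Ioi i, Real.log (Disconnect A p (R i) (R j)) := by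
        refine Finset.sum_congr rfl fun i _ => Finset.sum_congr rfl fun j hj => ?_
        rw [Disconnect_insert_not_cross
          (hncross i j (ne_of_lt (Finset.mem_Ioi.mp hj))) he]
      rw [h1, h2]; ring
    have hval : ∀ w ∈ Set.Icc (0:ℝ) 1, 0 < (1 - w) * C0 + w * C1 := by
      intro w hw
      obtain ⟨hw0, hw1⟩ := hw
      nlinarith [mul_nonneg hw0 (sub_nonneg.mpr hC1)]
    constructor
    · rw [hform 0]
      norm_num
    · intro w1 hw1 w2 hw2 h12
      rw [hform w1, hform w2]
      have hle : Real.log ((1 - w1) * C0 + w1 * C1)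
          ≤ Real.log ((1 - w2) * C0 + w2 * C1) :=
        Real.log_le_log (hval w1 hw1)
          (by nlinarith [mul_nonneg (sub_nonneg.mpr h12) (sub_nonneg.mpr hC1)])
      linarith
  · -- case (b)
    obtain ⟨j0, hu⟩ := hcover u
    obtain ⟨k0, hv⟩ := hcover v
    have hjk : j0 ≠ k0 := fun h => hcase ⟨j0, hu, h ▸ hv⟩
    have hnin : ∀ i, ¬ insideCluster (R i) e0 := by
      intro i hins
      exact hcase ⟨i, hins u hmem_u, hins v hmem_v⟩
    have hcross_only : ∀ i j, crossPair (R i) (R j) e0 →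
        (i = j0 ∧ j = k0) ∨ (i = k0 ∧ j = j0) := by
      rintro i j ⟨a, ha, b, hb, hab⟩
      rcases Sym2.eq_iff.mp hab with ⟨rfl, rfl⟩ | ⟨rfl, rfl⟩
      · exact Or.inl ⟨(hkey ha hu), (hkey hb hv)⟩
      · exact Or.inr ⟨(hkey ha hv), (hkey hb hu)⟩
    obtain ⟨i0, j1, hij, hcr, hnc⟩ :
        ∃ i0 j1, i0 < j1 ∧ crossPair (R i0) (R j1) e0 ∧
          ∀ i j, i < j → ¬(i = i0 ∧ j = j1) → ¬ crossPair (R i) (R j) e0 := by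
      rcases lt_or_gt_of_ne hjk with hlt | hlt
      · refine ⟨j0, k0, hlt, ⟨u, hu, v, hv, rfl⟩, ?_⟩
        intro i j hij hne hc
        rcases hcross_only i j hc with ⟨rfl, rfl⟩ | ⟨rfl, rfl⟩
        · exact hne ⟨rfl, rfl⟩
        · exact absurd hij (not_lt.mpr hlt.le)
      · refine ⟨k0, j0, hlt, ⟨v, hv, u, hu, Sym2.eq_swap⟩, ?_⟩
        intro i j hij hne hc
        rcases hcross_only i j hc with ⟨rfl, rfl⟩ | ⟨rfl, rfl⟩
        · exact absurd hij (not_lt.mpr hlt.le)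
        · exact hne ⟨rfl, rfl⟩
    set G := A.filter (crossPair (R i0) (R j1)) with hG
    set P := ∏ e ∈ G, p e with hP
    have hGne : G ≠ ∅ := by
      intro h
      have := hdisc i0 j1 hij
      rw [Disconnect, ← hG, if_pos h] at this
      exact lt_irrefl 0 this
    have hold : Disconnect A p (R i0) (R j1) = 1 - P := by
      rw [Disconnect, ← hG, if_neg hGne]
    have hPnn : 0 ≤ P := Finset.prod_nonneg fun e heG =>
      (hp e (Finset.mem_filter.mp heG).1).1
    have hPlt : P < 1 := by
      have := hdisc i0 j1 hij
      rw [hold] at this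
      linarith
    have hform : ∀ w, Rel' w = Reliability A p R
        + (Real.log (1 - (1 - w) * P) - Real.log (1 - P)) := by
      intro w
      rw [hRel' w, if_neg hcase]
      unfold Reliability
      have h1 : ∑ i, Real.log (Connect (insert e0 A) (Function.update p e0 (1 - w)) (R i))
          = ∑ i, Real.log (Connect A p (R i)) := by
        refine Finset.sum_congr rfl fun i _ => ?_
        rw [Connect_insert_not_inside (hnin i) he]
      have h2 : ∑ i, ∑ j ∈ Finset.Ioi i,
            Real.log (Disconnect (insert e0 A) (Function.update p e0 (1 - w)) (R i) (R j))
          = (∑ i, ∑ j ∈ Finset.Ioi i, Real.log (Disconnect A p (R i) (R j)))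
            + (Real.log (1 - (1 - w) * P) - Real.log (1 - P)) := by
        rw [sum2_sub_single _ _ i0 j1 hij (fun i j hj hne => by
          rw [Disconnect_insert_not_cross (hnc i j (Finset.mem_Ioi.mp hj) hne) he])]
        rw [Disconnect_insert_cross hcr he, ← hG, ← hP, hold]
      rw [h1, h2]; ring
    constructor
    · rw [hform 0]
      norm_num
    · intro w1 hw1 w2 hw2 h12
      rw [hform w1, hform w2]
      have hpos : 0 < 1 - (1 - w1) * P := by
        nlinarith [mul_nonneg hw1.1 hPnn]
      have hle : Real.log (1 - (1 - w1) * P) ≤ Real.log (1 - (1 - w2) * P) :=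
        Real.log_le_log hpos
          (by nlinarith [mul_nonneg (sub_nonneg.mpr h12) hPnn])
      linarith
end
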